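/- Suppose φ* is twice differentiable and assumption H1 holds. Then assumption H2₁ (respectively, in the stochastic setting, assumption H2₂) holds if any one of the following conditions is met: (a) for every x ∈ int(dom φ) ∩ C, ∇²φ*(∇φ(x)) is invertible; (b) φ is twice differentiable on int(dom φ); (c) I is finite and, for every x ∈ int(dom φ) ∩ C, A ∇²φ*(∇φ(x)) ≠ 0; (d) I is finite, X = ℝⁿ, 0 ∉ C, and φ(x) = (1/p)‖x‖_p^p for some p ∈ (1,2). -/

import Mathlib

open Set Filter Topology MeasureTheory ProbabilityTheory
open scoped InnerProductSpace ENNReal Classical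

noncomputable section

/-- A Legendre function on a Euclidean space `X`, represented by its (finite) values `f` on its
effective domain `dom`, together with the data of its Fenchel conjugate (`conj` on `domConj`)
and the gradients of both. -/
structure LegendreFn (X : Type*) [NormedAddCommGroup X] [InnerProductSpace ℝ X]
    [FiniteDimensional ℝ X] where
  /-- the values of `φ` on its domain -/
  f : X → ℝ
  /-- the effective domain of `φ` (`φ = +∞` outside of it) -/
  dom : Set X
  /-- the values of the Fenchel conjugate `φ*` on its domain -/
  conj : X → ℝ
  /-- the effective domain of `φ*` -/
  domConj : Set X
  /-- the gradient of `φ` (meaningful on `interior dom`) -/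
  grad : X → X
  /-- the gradient of `φ*` (meaningful on `interior domConj`) -/
  gradConj : X → X
  dom_nonempty : dom.Nonempty
  int_dom_nonempty : (interior dom).Nonempty
  dom_convex : Convex ℝ dom
  convexOn : ConvexOn ℝ dom f
  /-- `φ` is closed: the epigraph of the extended function is closed -/
  closedEpi : IsClosed {p : X × ℝ | p.1 ∈ dom ∧ f p.1 ≤ p.2}
  /-- essential smoothness, part 1: differentiability on the interior of the domain -/
  hasGrad : ∀ x ∈ interior dom, HasGradientAt f (grad x) x
  /-- essential smoothness, part 2: the gradient blows up at the boundary -/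
  grad_blowup : ∀ (u : ℕ → X) (x : X), (∀ n, u n ∈ interior dom) → x ∈ frontier dom →
      Tendsto u atTop (nhds x) → Tendsto (fun n => ‖grad (u n)‖) atTop atTop
  /-- `domConj` is the set where the conjugate supremum is finite -/
  domConj_spec : ∀ y : X, y ∈ domConj ↔ BddAbove ((fun x => ⟪x, y⟫_ℝ - f x) '' dom)
  /-- `conj` is the Fenchel conjugate of `φ` -/
  conj_spec : ∀ y ∈ domConj, IsLUB ((fun x => ⟪x, y⟫_ℝ - f x) '' dom) (conj y)
  int_domConj_nonempty : (interior domConj).Nonempty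
  /-- essential strict convexity: `φ` is strictly convex on every convex subset of `dom ∂φ` -/
  strict : ∀ s : Set X,
      s ⊆ {x ∈ dom | ∃ v : X, ∀ z ∈ dom, f x + ⟪v, z - x⟫_ℝ ≤ f z} →
      Convex ℝ s → StrictConvexOn ℝ s f
  hasGradConj : ∀ y ∈ interior domConj, HasGradientAt conj (gradConj y) y
  /-- Bregman projections onto closed convex sets meeting `interior dom` exist
  (Bauschke–Borwein). -/
  proj_exists : ∀ S : Set X, IsClosed S → Convex ℝ S → (S ∩ interior dom).Nonempty →
      ∀ x ∈ interior dom, ∃ p ∈ S ∩ interior dom, ∀ z ∈ S ∩ dom,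
        f p - ⟪p, grad x⟫_ℝ ≤ f z - ⟪z, grad x⟫_ℝ

namespace LegendreFn

variable {X : Type*} [NormedAddCommGroup X] [InnerProductSpace ℝ X] [FiniteDimensional ℝ X]

/-- The Bregman distance `D_φ(x, y)`; the formula is meaningful for `x ∈ dom φ` and
`y ∈ int (dom φ)`. -/
def breg (L : LegendreFn X) (x y : X) : ℝ :=
  L.f x - L.f y - ⟪x - y, L.grad y⟫_ℝ

/-- The Bregman distance from the point `y` to the set `S`: `D_S(y) = inf_{z ∈ S} D_φ(z, y)`. -/
def distTo (L : LegendreFn X) (S : Set X) (y : X) : ℝ :=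
  sInf ((fun z => L.breg z y) '' (S ∩ L.dom))

/-- `p` is the Bregman projection of `x` onto `S`. -/
def IsBregProj (L : LegendreFn X) (S : Set X) (x p : X) : Prop :=
  p ∈ S ∧ p ∈ interior L.dom ∧ ∀ z ∈ S ∩ L.dom, L.breg p x ≤ L.breg z x

/-- The Bregman projection of `x` onto `S` (as a function; well defined whenever the Bregman
projection exists, since it is then unique). -/
def proj (L : LegendreFn X) (S : Set X) (x : X) : X :=
  @Classical.epsilon X ⟨0⟩ (L.IsBregProj S x)

end LegendreFn

/-- Condition SC (sequential consistency). -/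
def SCcond {X : Type*} [NormedAddCommGroup X] [InnerProductSpace ℝ X] [FiniteDimensional ℝ X]
    (L : LegendreFn X) : Prop :=
  ∀ z y : ℕ → X, (∀ n, z n ∈ interior L.dom) → (∀ n, y n ∈ interior L.dom) →
    Bornology.IsBounded (Set.range z) → Bornology.IsBounded (Set.range y) →
    Tendsto (fun n => L.breg (z n) (y n)) atTop (nhds 0) →
    Tendsto (fun n => z n - y n) atTop (nhds 0)

/-- Assumption H0: `C ≠ X`, `dom φ*` is open and `int (dom φ) ∩ C ≠ ∅`
(`φ` being Legendre is part of the `LegendreFn` structure). -/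
def H0 {X : Type*} [NormedAddCommGroup X] [InnerProductSpace ℝ X] [FiniteDimensional ℝ X]
    (L : LegendreFn X) (C : Set X) : Prop :=
  C ≠ Set.univ ∧ IsOpen L.domConj ∧ (interior L.dom ∩ C).Nonempty

/-- `G` is the Moore–Penrose pseudoinverse of `T`. -/
def IsMPInv {E F : Type*} [NormedAddCommGroup E] [InnerProductSpace ℝ E] [FiniteDimensional ℝ E]
    [NormedAddCommGroup F] [InnerProductSpace ℝ F] [FiniteDimensional ℝ F]
    (T : E →L[ℝ] F) (G : F →L[ℝ] E) : Prop :=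
  T ∘L G ∘L T = T ∧ G ∘L T ∘L G = G ∧
    ContinuousLinearMap.adjoint (T ∘L G) = T ∘L G ∧
    ContinuousLinearMap.adjoint (G ∘L T) = G ∘L T

/-- The orthogonal projection onto a subspace, as a map `X →L[ℝ] X`. -/
def projL {X : Type*} [NormedAddCommGroup X] [InnerProductSpace ℝ X] [FiniteDimensional ℝ X]
    (K : Submodule ℝ X) : X →L[ℝ] X :=
  K.subtypeL.comp (K.orthogonalProjectionOnto)

/-- The set `K(x)` of points having the same Bregman projection onto `C` as `x` and not larger
Bregman distance to `C`. -/
def Kset {X : Type*} [NormedAddCommGroup X] [InnerProductSpace ℝ X] [FiniteDimensional ℝ X]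
    (L : LegendreFn X) (C : Set X) (x : X) : Set X :=
  {z | z ∈ interior L.dom ∧ L.proj C z = L.proj C x ∧ L.distTo C z ≤ L.distTo C x}

section Affine

variable {X Y : Type*} [NormedAddCommGroup X] [InnerProductSpace ℝ X] [FiniteDimensional ℝ X]
  [NormedAddCommGroup Y] [InnerProductSpace ℝ Y] [FiniteDimensional ℝ Y]
  {I : Type*} {Yf : I → Type*} [∀ i, NormedAddCommGroup (Yf i)]
  [∀ i, InnerProductSpace ℝ (Yf i)] [∀ i, FiniteDimensional ℝ (Yf i)]

/-- Assumption H2₁: `φ*` is twice differentiable (with second derivative `hess`), and for all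
`x ∈ int (dom φ) ∩ C`, `A ∘ ∇²φ*(∇φ(x)) ≠ 0` and
`sup_i ‖Aᵢ* (Aᵢ ∇²φ*(∇φ(x)) Aᵢ*)† Aᵢ‖ < ∞`. -/
def H21 (L : LegendreFn X) (A : ∀ i, X →L[ℝ] Yf i) (AY : X →L[ℝ] Y) (C : Set X)
    (hess : X → X →L[ℝ] X) : Prop :=
  (∀ y ∈ interior L.domConj, HasFDerivAt L.gradConj (hess y) y) ∧
  ∀ x ∈ interior L.dom ∩ C,
    AY ∘L hess (L.grad x) ≠ 0 ∧
    ∃ M : ℝ, ∀ (i : I) (G : Yf i →L[ℝ] Yf i),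
      IsMPInv (A i ∘L hess (L.grad x) ∘L ContinuousLinearMap.adjoint (A i)) G →
      ‖ContinuousLinearMap.adjoint (A i) ∘L G ∘L A i‖ ≤ M

/-- The orthogonal projection `Q_i(x)` onto `range (H(x) Aᵢ*)`, where `H(x)` (here `Hrt x`) is
the positive square root of `∇²φ*(∇φ(x))`. -/
def Qproj (A : ∀ i, X →L[ℝ] Yf i) (Hrt : X → X →L[ℝ] X) (i : I) (x : X) : X →L[ℝ] X :=
  projL (LinearMap.range ((Hrt x ∘L ContinuousLinearMap.adjoint (A i) : Yf i →L[ℝ] X) : Yf i →ₗ[ℝ] X))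

/-- The subspace `V(x) = range (H(x) A*)`. -/
def Vsub (AY : X →L[ℝ] Y) (Hrt : X → X →L[ℝ] X) (x : X) : Submodule ℝ X :=
  LinearMap.range ((Hrt x ∘L ContinuousLinearMap.adjoint AY : Y →L[ℝ] X) : Y →ₗ[ℝ] X)

/-- `γ_𝒞(x) = inf_{v ∈ V(x) \ {0}} sup_i ‖Q_i(x) v‖² / ‖v‖²`. -/
def gammaC (A : ∀ i, X →L[ℝ] Yf i) (AY : X →L[ℝ] Y) (Hrt : X → X →L[ℝ] X) (x : X) : ℝ :=
  ⨅ v : {v : X // v ∈ Vsub AY Hrt x ∧ v ≠ 0},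
    ⨆ i : I, ‖Qproj A Hrt i x v.1‖ ^ 2 / ‖v.1‖ ^ 2

/-- `σ_𝒞(x)`, the (deterministic, greedy) contraction factor. -/
def sigmaC (L : LegendreFn X) (Cs : I → Set X) (C : Set X) (γ : X → ℝ) (x : X) : ℝ :=
  if x ∈ C then 1 - γ x
  else ⨆ z : ↥(Kset L C x \ C), ⨅ i : I, L.distTo C (L.proj (Cs i) z) / L.distTo C z

end Affine

section Stochastic

variable {X Y : Type*} [NormedAddCommGroup X] [InnerProductSpace ℝ X] [FiniteDimensional ℝ X]
  [NormedAddCommGroup Y] [InnerProductSpace ℝ Y] [FiniteDimensional ℝ Y]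
  {I : Type*} {Yf : I → Type*} [∀ i, NormedAddCommGroup (Yf i)]
  [∀ i, InnerProductSpace ℝ (Yf i)] [∀ i, FiniteDimensional ℝ (Yf i)]
  {Ω : Type*} [MeasurableSpace Ω]

/-- Assumption H2₂ (stochastic version of H2₁, with an essential supremum). -/
def H22 (L : LegendreFn X) (A : ∀ i, X →L[ℝ] Yf i) (AY : X →L[ℝ] Y) (C : Set X)
    (hess : X → X →L[ℝ] X) (P : Measure Ω) (ξ : Ω → I) : Prop :=
  (∀ y ∈ interior L.domConj, HasFDerivAt L.gradConj (hess y) y) ∧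
  ∀ x ∈ interior L.dom ∩ C,
    AY ∘L hess (L.grad x) ≠ 0 ∧
    ∃ M : ℝ, ∀ᵐ ω ∂P, ∀ G : Yf (ξ ω) →L[ℝ] Yf (ξ ω),
      IsMPInv (A (ξ ω) ∘L hess (L.grad x) ∘L ContinuousLinearMap.adjoint (A (ξ ω))) G →
      ‖ContinuousLinearMap.adjoint (A (ξ ω)) ∘L G ∘L A (ξ ω)‖ ≤ M

/-- `Q̄(x) = E[Q_ξ(x)]` (Bochner expectation). -/
def Qbar (A : ∀ i, X →L[ℝ] Yf i) (Hrt : X → X →L[ℝ] X) (P : Measure Ω) (ξ : Ω → I) (x : X) :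
    X →L[ℝ] X :=
  ∫ ω, Qproj A Hrt (ξ ω) x ∂P

/-- `γ_{𝒞,μ}(x) = inf_{v ∈ V(x) \ {0}} ⟪Q̄(x) v, v⟫ / ‖v‖²`. -/
def gammaCmu (A : ∀ i, X →L[ℝ] Yf i) (AY : X →L[ℝ] Y) (Hrt : X → X →L[ℝ] X)
    (P : Measure Ω) (ξ : Ω → I) (x : X) : ℝ :=
  ⨅ v : {v : X // v ∈ Vsub AY Hrt x ∧ v ≠ 0},
    ⟪Qbar A Hrt P ξ x v.1, v.1⟫_ℝ / ‖v.1‖ ^ 2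

/-- `σ_{𝒞,μ}(x)`, the stochastic contraction factor. -/
def sigmaCmu (L : LegendreFn X) (Cs : I → Set X) (C : Set X) (γ : X → ℝ)
    (P : Measure Ω) (ξ : Ω → I) (x : X) : ℝ :=
  if x ∈ C then 1 - γ x
  else ⨆ z : ↥(Kset L C x \ C),
    (∫ ω, L.distTo C (L.proj (Cs (ξ ω)) z) ∂P) / L.distTo C z

/-- `D̄_C(x) = E[D_{C_ξ}(x)]`. -/
def DbarFn (L : LegendreFn X) (Cs : I → Set X) (P : Measure Ω) (ξ : Ω → I) (x : X) : ℝ :=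
  ∫ ω, L.distTo (Cs (ξ ω)) x ∂P

end Stochastic

/-! The gradient of a Legendre function maps `int (dom φ)` into `int (dom φ*)`: otherwise an outer
normal `n` to `dom φ*` at `∇φ x` would make `φ = φ**` affine along `x + s • n`, against strict
convexity. There `∇φ* ∘ ∇φ = id`, so `H = ∇²φ*(∇φ x)` is symmetric and positive semidefinite,
and invertible in case (b). An invertible such `H` is coercive, `c ‖z‖² ≤ ⟪H z, z⟫`, and then
`‖Aᵢ* (Aᵢ H Aᵢ*)† Aᵢ‖ ≤ 1 / c` for every `i`, since `w = (Aᵢ H Aᵢ*)† Aᵢ u` solves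
`Aᵢ H Aᵢ* w = Aᵢ u` and so `c ‖Aᵢ* w‖² ≤ ⟪Aᵢ u, w⟫ ≤ ‖u‖ ‖Aᵢ* w‖`. For finite `I` the pseudoinverses
are unique, hence finitely many. In case (d) `∇φ` is `(p - 1)`-homogeneous, and differentiating
`∇φ* (t ^ (p - 1) • ∇φ x) = t • x` at `t = 1` gives `(p - 1) H (∇φ x) = x`, with `A x = b ≠ 0`. -/

open ContinuousLinearMap

section MoorePenrose

variable {E F : Type*} [NormedAddCommGroup E] [InnerProductSpace ℝ E] [FiniteDimensional ℝ E]
  [NormedAddCommGroup F] [InnerProductSpace ℝ F] [FiniteDimensional ℝ F]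

theorem IsMPInv.unique {T : E →L[ℝ] F} {G₁ G₂ : F →L[ℝ] E} (h₁ : IsMPInv T G₁)
    (h₂ : IsMPInv T G₂) : G₁ = G₂ := by
  obtain ⟨h₁a, h₁b, h₁c, h₁d⟩ := h₁
  obtain ⟨h₂a, h₂b, h₂c, h₂d⟩ := h₂
  have hTG : T ∘L G₁ = T ∘L G₂ := calc
    T ∘L G₁ = (T ∘L G₂ ∘L T) ∘L G₁ := by rw [h₂a]
    _ = (T ∘L G₂) ∘L (T ∘L G₁) := by simp only [comp_assoc]
    _ = adjoint ((T ∘L G₁) ∘L (T ∘L G₂)) := by rw [adjoint_comp, h₁c, h₂c]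
    _ = T ∘L G₂ := by rw [← comp_assoc, comp_assoc T G₁ T, h₁a, h₂c]
  have hGT : G₁ ∘L T = G₂ ∘L T := calc
    G₁ ∘L T = G₁ ∘L (T ∘L G₂ ∘L T) := by rw [h₂a]
    _ = (G₁ ∘L T) ∘L (G₂ ∘L T) := by simp only [comp_assoc]
    _ = adjoint ((G₂ ∘L T) ∘L (G₁ ∘L T)) := by rw [adjoint_comp, h₁d, h₂d]
    _ = G₂ ∘L T := by rw [comp_assoc, h₁a, h₂d]
  calc G₁ = G₁ ∘L T ∘L G₁ := h₁b.symm
    _ = G₂ ∘L T ∘L G₂ := by rw [← comp_assoc, hGT, comp_assoc, hTG]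
    _ = G₂ := h₂b

theorem IsMPInv.norm_adjoint_comp_comp_le {H : E →L[ℝ] E} {c : ℝ} (hc : 0 < c)
    (hH : ∀ z, c * ‖z‖ ^ 2 ≤ ⟪H z, z⟫_ℝ) (A : E →L[ℝ] F) {G : F →L[ℝ] F}
    (hG : IsMPInv (A ∘L H ∘L adjoint A) G) : ‖adjoint A ∘L G ∘L A‖ ≤ c⁻¹ := by
  set T := A ∘L H ∘L adjoint A
  have hT : ∀ w, ⟪T w, w⟫_ℝ = ⟪H (adjoint A w), adjoint A w⟫_ℝ := fun w =>
    (adjoint_inner_right A _ w).symm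
  have hker : ∀ w, adjoint T w = 0 → adjoint A w = 0 := by
    intro w hw
    have h := hH (adjoint A w)
    rw [← hT, ← adjoint_inner_right, hw, inner_zero_right] at h
    have hsq : ‖adjoint A w‖ ^ 2 = 0 := le_antisymm (by nlinarith) (sq_nonneg _)
    simpa using hsq
  -- `A u` lies in the range of `T`, on which `T ∘L G` is the identity
  have hTG : ∀ u, T (G (A u)) = A u := by
    intro u
    set r := A u - T (G (A u))
    have hr : adjoint T r = 0 := by
      refine ext_inner_right ℝ fun v => ?_
      have hproj : ⟪T (G (A u)), T v⟫_ℝ = ⟪A u, T v⟫_ℝ := calc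
        ⟪T (G (A u)), T v⟫_ℝ = ⟪A u, adjoint (T ∘L G) (T v)⟫_ℝ :=
          (adjoint_inner_right (T ∘L G) _ _).symm
        _ = ⟪A u, T v⟫_ℝ := by rw [hG.2.2.1]; exact congrArg _ (DFunLike.congr_fun hG.1 v)
      rw [adjoint_inner_left, inner_zero_left, inner_sub_left, hproj, sub_self]
    have hAr : adjoint A r = 0 := hker r hr
    have : ⟪r, r⟫_ℝ = 0 := by
      rw [inner_sub_left, ← adjoint_inner_right, hAr, inner_zero_right, ← adjoint_inner_right T,
        hr, inner_zero_right, sub_zero]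
    exact (sub_eq_zero.1 (inner_self_eq_zero.1 this)).symm
  refine opNorm_le_bound _ (inv_nonneg.2 hc.le) fun u => ?_
  set e := (adjoint A ∘L G ∘L A) u
  have key : c * ‖e‖ ^ 2 ≤ ‖u‖ * ‖e‖ := calc
    c * ‖e‖ ^ 2 ≤ ⟪T (G (A u)), G (A u)⟫_ℝ := by rw [hT]; exact hH e
    _ = ⟪u, e⟫_ℝ := by rw [hTG, ← adjoint_inner_right]; rfl
    _ ≤ ‖u‖ * ‖e‖ := real_inner_le_norm u e
  rw [inv_mul_eq_div, le_div_iff₀ hc]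
  nlinarith [norm_nonneg e, norm_nonneg u]

theorem IsMPInv.exists_bound_of_finite {ι : Type*} [Finite ι] {E F : ι → Type*}
    [∀ i, NormedAddCommGroup (E i)] [∀ i, InnerProductSpace ℝ (E i)]
    [∀ i, FiniteDimensional ℝ (E i)] [∀ i, NormedAddCommGroup (F i)]
    [∀ i, InnerProductSpace ℝ (F i)] [∀ i, FiniteDimensional ℝ (F i)]
    (T : ∀ i, E i →L[ℝ] F i) (Φ : ∀ i, (F i →L[ℝ] E i) → ℝ) :
    ∃ M, ∀ i G, IsMPInv (T i) G → Φ i G ≤ M := by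
  have hbound : ∀ i, ∃ m, ∀ G, IsMPInv (T i) G → Φ i G ≤ m := by
    intro i
    by_cases h : ∃ G, IsMPInv (T i) G
    · obtain ⟨G₀, hG₀⟩ := h
      exact ⟨Φ i G₀, fun G hG => by rw [hG.unique hG₀]⟩
    · exact ⟨0, fun G hG => absurd ⟨G, hG⟩ h⟩
  choose m hm using hbound
  obtain ⟨M, hM⟩ := (Set.finite_range m).bddAbove
  exact ⟨M, fun i G hG => (hm i G hG).trans (hM ⟨i, rfl⟩)⟩

end MoorePenrose

section PositiveOperator

variable {E : Type*} [NormedAddCommGroup E] [InnerProductSpace ℝ E]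

theorem ContinuousLinearMap.IsPositive.apply_eq_zero_of_inner_self_eq_zero {H : E →L[ℝ] E}
    (hH : H.IsPositive) {v : E} (hv : ⟪H v, v⟫_ℝ = 0) : H v = 0 := by
  -- `t ↦ ⟪H (v + t • H v), v + t • H v⟫` is a nonnegative quadratic with no constant term
  have hquad : ∀ t : ℝ, 0 ≤ ⟪H (H v), H v⟫_ℝ * (t * t) + 2 * ⟪H v, H v⟫_ℝ * t + 0 := by
    intro t
    have h := hH.inner_nonneg_left (v + t • H v)
    simp only [map_add, map_smul, inner_add_left, inner_add_right, real_inner_smul_left,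
      real_inner_smul_right, hv] at h
    rw [hH.inner_left_eq_inner_right (H v) v] at h
    linarith
  have h := discrim_le_zero hquad
  rw [discrim, mul_zero, sub_zero] at h
  have h2 : (2 * ⟪H v, H v⟫_ℝ) ^ 2 = 0 := le_antisymm h (sq_nonneg _)
  simpa using h2

theorem ContinuousLinearMap.IsPositive.exists_pos_mul_norm_sq_le [FiniteDimensional ℝ E]
    {H : E →L[ℝ] E} (hH : H.IsPositive) (hinj : Function.Injective H) :
    ∃ c > 0, ∀ z, c * ‖z‖ ^ 2 ≤ ⟪H z, z⟫_ℝ := by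
  rcases subsingleton_or_nontrivial E with hE | hE
  · exact ⟨1, one_pos, fun z => by simp [Subsingleton.elim z 0]⟩
  obtain ⟨v₀, hv₀, hmin⟩ := (isCompact_sphere (0 : E) 1).exists_isMinOn
    (NormedSpace.sphere_nonempty.2 zero_le_one)
    (f := fun v => ⟪H v, v⟫_ℝ) (by fun_prop)
  have hv₀ne : v₀ ≠ 0 := ne_zero_of_mem_unit_sphere ⟨v₀, hv₀⟩
  refine ⟨⟪H v₀, v₀⟫_ℝ, (hH.inner_nonneg_left v₀).lt_of_ne fun h => hv₀ne ?_, fun z => ?_⟩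
  · exact hinj (by rw [hH.apply_eq_zero_of_inner_self_eq_zero h.symm, map_zero])
  rcases eq_or_ne z 0 with rfl | hz
  · simp
  have hz' : 0 < ‖z‖ := norm_pos_iff.2 hz
  have h : ⟪H v₀, v₀⟫_ℝ ≤ ⟪H (‖z‖⁻¹ • z), ‖z‖⁻¹ • z⟫_ℝ :=
    hmin (show ‖z‖⁻¹ • z ∈ Metric.sphere (0 : E) 1 by simp [norm_smul, hz'.ne'])
  rw [map_smul, real_inner_smul_left, real_inner_smul_right] at h
  calc ⟪H v₀, v₀⟫_ℝ * ‖z‖ ^ 2 ≤ ‖z‖⁻¹ * (‖z‖⁻¹ * ⟪H z, z⟫_ℝ) * ‖z‖ ^ 2 := by gcongr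
    _ = ⟪H z, z⟫_ℝ := by field_simp

end PositiveOperator

section ConvexGradient

variable {E : Type*} [NormedAddCommGroup E] [InnerProductSpace ℝ E] [CompleteSpace E]
  {g : E → ℝ} {s : Set E}

theorem ConvexOn.inner_gradient_le_sub (hg : ConvexOn ℝ s g) {x z v : E} (hx : x ∈ s)
    (hz : z ∈ s) (hv : HasGradientAt g v x) : ⟪v, z - x⟫_ℝ ≤ g z - g x := by
  set ℓ : ℝ →ᵃ[ℝ] E := AffineMap.lineMap x z
  have hline : HasDerivAt (g ∘ ℓ) ⟪v, z - x⟫_ℝ 0 := by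
    have hℓ : HasDerivAt ℓ (z - x) 0 := AffineMap.hasDerivAt_lineMap
    have hv' := hasGradientAt_iff_hasFDerivAt.1 hv
    rw [← AffineMap.lineMap_apply_zero (k := ℝ) x z] at hv'
    simpa using hv'.comp_hasDerivAt 0 hℓ
  have h := (hg.comp_affineMap ℓ).le_slope_of_hasDerivAt (by simpa [ℓ] using hx)
    (by simpa [ℓ] using hz) zero_lt_one hline
  simpa [slope_def_field, ℓ] using h

theorem ConvexOn.inner_gradient_sub_nonneg (hg : ConvexOn ℝ s g) {x₁ x₂ v₁ v₂ : E}
    (hx₁ : x₁ ∈ s) (hx₂ : x₂ ∈ s) (hv₁ : HasGradientAt g v₁ x₁) (hv₂ : HasGradientAt g v₂ x₂) :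
    0 ≤ ⟪v₁ - v₂, x₁ - x₂⟫_ℝ := by
  have h₁ := hg.inner_gradient_le_sub hx₁ hx₂ hv₁
  have h₂ := hg.inner_gradient_le_sub hx₂ hx₁ hv₂
  have hflip : ∀ v : E, ⟪v, x₁ - x₂⟫_ℝ = -⟪v, x₂ - x₁⟫_ℝ := fun v => by
    rw [← inner_neg_right, neg_sub]
  rw [inner_sub_left, hflip v₁]
  linarith

end ConvexGradient

namespace LegendreFn

variable {X : Type*} [NormedAddCommGroup X] [InnerProductSpace ℝ X] [FiniteDimensional ℝ X]
  (L : LegendreFn X) {hess : X → X →L[ℝ] X}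

theorem inner_sub_f_le_conj {w z : X} (hw : w ∈ L.domConj) (hz : z ∈ L.dom) :
    ⟪z, w⟫_ℝ - L.f z ≤ L.conj w :=
  (L.conj_spec w hw).1 ⟨z, hz, rfl⟩

theorem isGreatest_inner_grad_sub_f {x : X} (hx : x ∈ interior L.dom) :
    IsGreatest ((fun z => ⟪z, L.grad x⟫_ℝ - L.f z) '' L.dom) (⟪x, L.grad x⟫_ℝ - L.f x) := by
  refine ⟨⟨x, interior_subset hx, rfl⟩, ?_⟩
  rintro _ ⟨z, hz, rfl⟩
  have h := L.convexOn.inner_gradient_le_sub (interior_subset hx) hz (L.hasGrad x hx)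
  rw [inner_sub_right, real_inner_comm z, real_inner_comm x] at h
  dsimp only
  linarith

theorem grad_mem_domConj {x : X} (hx : x ∈ interior L.dom) : L.grad x ∈ L.domConj :=
  (L.domConj_spec _).2 (L.isGreatest_inner_grad_sub_f hx).bddAbove

theorem conj_grad {x : X} (hx : x ∈ interior L.dom) :
    L.conj (L.grad x) = ⟪x, L.grad x⟫_ℝ - L.f x :=
  (L.conj_spec _ (L.grad_mem_domConj hx)).unique (L.isGreatest_inner_grad_sub_f hx).isLUB

theorem combo_conj_mem_upperBounds {w₁ w₂ : X} (h₁ : w₁ ∈ L.domConj) (h₂ : w₂ ∈ L.domConj)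
    {a b : ℝ} (ha : 0 ≤ a) (hb : 0 ≤ b) (hab : a + b = 1) :
    a * L.conj w₁ + b * L.conj w₂ ∈
      upperBounds ((fun z => ⟪z, a • w₁ + b • w₂⟫_ℝ - L.f z) '' L.dom) := by
  rintro _ ⟨z, hz, rfl⟩
  have e₁ := mul_le_mul_of_nonneg_left (L.inner_sub_f_le_conj h₁ hz) ha
  have e₂ := mul_le_mul_of_nonneg_left (L.inner_sub_f_le_conj h₂ hz) hb
  have hfz : (a + b) * L.f z = L.f z := by rw [hab, one_mul]
  simp only [inner_add_right, real_inner_smul_right]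
  linarith

theorem convex_domConj : Convex ℝ L.domConj := fun _ h₁ _ h₂ _ _ ha hb hab =>
  (L.domConj_spec _).2 ⟨_, L.combo_conj_mem_upperBounds h₁ h₂ ha hb hab⟩

theorem convexOn_conj : ConvexOn ℝ L.domConj L.conj :=
  ⟨L.convex_domConj, fun _ h₁ _ h₂ _ _ ha hb hab =>
    (L.conj_spec _ (L.convex_domConj h₁ h₂ ha hb hab)).2
      (L.combo_conj_mem_upperBounds h₁ h₂ ha hb hab)⟩

/-- `φ = φ**` on `dom φ`. -/
theorem exists_lt_inner_sub_conj {z : X} (hz : z ∈ L.dom) {a : ℝ} (ha : a < L.f z) :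
    ∃ w ∈ L.domConj, a < ⟪z, w⟫_ℝ - L.conj w := by
  obtain ⟨ℓ, u, hepi, hpt⟩ := geometric_hahn_banach_closed_point L.convexOn.convex_epigraph
    L.closedEpi (x := (z, a)) fun h => ha.not_ge h.2
  set k := -ℓ (0, 1)
  have hℓ : ∀ y r, ℓ (y, r) = ℓ (y, 0) - r * k := by
    intro y r
    have : ((y, r) : X × ℝ) = (y, 0) + r • (0, 1) := by simp
    rw [this, map_add, map_smul, smul_eq_mul]
    ring
  -- the separating hyperplane is not vertical: `(z, f z)` is on one side, `(z, a)` on the other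
  have hk : 0 < k := by
    have h := (hepi (z, L.f z) ⟨hz, le_rfl⟩).trans hpt
    rw [hℓ z, hℓ z a] at h
    nlinarith
  obtain ⟨w, hw⟩ : ∃ w : X, ∀ y, ⟪y, w⟫_ℝ * k = ℓ (y, 0) :=
    ⟨k⁻¹ • (InnerProductSpace.toDual ℝ X).symm (ℓ.comp (ContinuousLinearMap.inl ℝ X ℝ)),
      fun y => by
        rw [real_inner_smul_right, real_inner_comm, InnerProductSpace.toDual_symm_apply]
        field_simp
        rfl⟩
  have hub : ∀ y ∈ L.dom, ⟪y, w⟫_ℝ - L.f y ≤ u / k := by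
    intro y hy
    have h := hepi (y, L.f y) ⟨hy, le_rfl⟩
    rw [hℓ, ← hw] at h
    rw [le_div_iff₀ hk]
    linarith
  have hub' : u / k ∈ upperBounds ((fun y => ⟪y, w⟫_ℝ - L.f y) '' L.dom) := by
    rintro _ ⟨y, hy, rfl⟩
    exact hub y hy
  have hw_mem : w ∈ L.domConj := (L.domConj_spec w).2 ⟨_, hub'⟩
  refine ⟨w, hw_mem, ?_⟩
  have hconj : L.conj w ≤ u / k := (L.conj_spec w hw_mem).2 hub'
  rw [hℓ, ← hw] at hpt
  have : u / k < ⟪z, w⟫_ℝ - a := by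
    rw [div_lt_iff₀ hk]
    linarith
  linarith

theorem strictConvexOn_interior : StrictConvexOn ℝ (interior L.dom) L.f := by
  refine L.strict _ (fun z hz => ⟨interior_subset hz, L.grad z, fun w hw => ?_⟩)
    L.dom_convex.interior
  have := L.convexOn.inner_gradient_le_sub (interior_subset hz) hw (L.hasGrad z hz)
  linarith

theorem f_add_smul_of_forall_inner_le {x n : X} (hx : x ∈ interior L.dom)
    (hn : ∀ w ∈ L.domConj, ⟪n, w⟫_ℝ ≤ ⟪n, L.grad x⟫_ℝ) {s : ℝ} (hs : 0 ≤ s)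
    (hmem : x + s • n ∈ L.dom) : L.f (x + s • n) = L.f x + s * ⟪n, L.grad x⟫_ℝ := by
  refine le_antisymm (not_lt.1 fun hlt => ?_) ?_
  · obtain ⟨w, hw, hlt'⟩ := L.exists_lt_inner_sub_conj hmem hlt
    have h₁ := L.inner_sub_f_le_conj hw (interior_subset hx)
    have h₂ := mul_le_mul_of_nonneg_left (hn w hw) hs
    rw [inner_add_left, real_inner_smul_left] at hlt'
    linarith
  · have h := L.convexOn.inner_gradient_le_sub (interior_subset hx) hmem (L.hasGrad x hx)
    rw [add_sub_cancel_left, real_inner_smul_right, real_inner_comm] at h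
    linarith

theorem grad_mem_interior_domConj {x : X} (hx : x ∈ interior L.dom) :
    L.grad x ∈ interior L.domConj := by
  by_contra hy
  obtain ⟨ℓ, u, hℓ, hle, hge⟩ := geometric_hahn_banach_of_nonempty_interior L.convex_domConj
    (convex_singleton _) (Set.disjoint_singleton_right.2 hy) L.int_domConj_nonempty
    (Set.singleton_nonempty _)
  set n := (InnerProductSpace.toDual ℝ X).symm ℓ
  have hn : n ≠ 0 := by simpa [n] using hℓ
  have hnormal : ∀ w ∈ L.domConj, ⟪n, w⟫_ℝ ≤ ⟪n, L.grad x⟫_ℝ := fun w hw => by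
    simpa [n, InnerProductSpace.toDual_symm_apply] using (hle w hw).trans (hge _ rfl)
  have hev : ∀ᶠ s in 𝓝[>] (0 : ℝ), x + s • n ∈ interior L.dom := by
    have hcont : Continuous fun s : ℝ => x + s • n := by fun_prop
    exact nhdsWithin_le_nhds <|
      hcont.continuousAt.preimage_mem_nhds (by simpa using isOpen_interior.mem_nhds hx)
  obtain ⟨δ, hδmem, hδ : 0 < δ⟩ := (hev.and self_mem_nhdsWithin).exists
  have hmid_eq : (1 / 2 : ℝ) • x + (1 / 2 : ℝ) • (x + δ • n) = x + (δ / 2) • n := by module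
  have hmid_mem : x + (δ / 2) • n ∈ interior L.dom :=
    hmid_eq ▸ L.dom_convex.interior hx hδmem (by norm_num) (by norm_num) (by norm_num)
  have hne : x ≠ x + δ • n := by simpa [eq_comm (a := (0 : X)), hn] using hδ.ne'
  have hmid := L.strictConvexOn_interior.2 hx hδmem hne (by norm_num : (0 : ℝ) < 1 / 2)
    (by norm_num : (0 : ℝ) < 1 / 2) (by norm_num)
  rw [hmid_eq, L.f_add_smul_of_forall_inner_le hx hnormal (by positivity)
      (interior_subset hmid_mem),
    L.f_add_smul_of_forall_inner_le hx hnormal hδ.le (interior_subset hδmem)] at hmid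
  simp only [smul_eq_mul] at hmid
  linarith

theorem gradConj_grad {x : X} (hx : x ∈ interior L.dom) : L.gradConj (L.grad x) = x := by
  have hy := L.grad_mem_interior_domConj hx
  -- by Fenchel–Young, `w ↦ φ* w - ⟪x, w⟫` is minimal at `∇φ x`
  have hmin : IsLocalMin (fun w => L.conj w - ⟪x, w⟫_ℝ) (L.grad x) := by
    filter_upwards [isOpen_interior.mem_nhds hy] with w hw
    have := L.inner_sub_f_le_conj (interior_subset hw) (interior_subset hx)
    rw [L.conj_grad hx]
    linarith
  have h := hmin.hasFDerivAt_eq_zero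
    ((hasGradientAt_iff_hasFDerivAt.1 (L.hasGradConj _ hy)).sub (innerSL ℝ x).hasFDerivAt)
  refine ext_inner_right ℝ fun v => ?_
  simpa [sub_eq_zero] using congr($h v)

theorem isSymmetric_hess (hhess : ∀ y ∈ interior L.domConj, HasFDerivAt L.gradConj (hess y) y)
    {y : X} (hy : y ∈ interior L.domConj) : (hess y).IsSymmetric := by
  intro u v
  have hconj : ∀ᶠ w in 𝓝 y, HasFDerivAt L.conj (innerSL ℝ (L.gradConj w)) w := by
    filter_upwards [isOpen_interior.mem_nhds hy] with w hw
    exact hasGradientAt_iff_hasFDerivAt.1 (L.hasGradConj w hw)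
  have h := second_derivative_symmetric_of_eventually hconj
    ((innerSL ℝ).hasFDerivAt.comp y (hhess y hy)) u v
  change ⟪hess y u, v⟫_ℝ = ⟪u, hess y v⟫_ℝ
  rw [real_inner_comm (hess y v) u]
  exact h

theorem inner_hess_apply_self_nonneg
    (hhess : ∀ y ∈ interior L.domConj, HasFDerivAt L.gradConj (hess y) y)
    {y : X} (hy : y ∈ interior L.domConj) (v : X) : 0 ≤ ⟪hess y v, v⟫_ℝ := by
  -- `t ↦ ⟪v, ∇φ* (y + t • v)⟫` is monotone near `0` since `φ*` is convex
  set S := {t : ℝ | y + t • v ∈ interior L.domConj}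
  have hS : S ∈ 𝓝 (0 : ℝ) := by
    have hcont : Continuous fun t : ℝ => y + t • v := by fun_prop
    exact hcont.continuousAt.preimage_mem_nhds (by simpa using isOpen_interior.mem_nhds hy)
  have hmono : MonotoneOn (fun t => ⟪v, L.gradConj (y + t • v)⟫_ℝ) S := by
    intro t₁ h₁ t₂ h₂ ht
    have h := L.convexOn_conj.inner_gradient_sub_nonneg (interior_subset h₂) (interior_subset h₁)
      (L.hasGradConj _ h₂) (L.hasGradConj _ h₁)
    rw [show y + t₂ • v - (y + t₁ • v) = (t₂ - t₁) • v by module, real_inner_smul_right,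
      inner_sub_left, real_inner_comm v, real_inner_comm v] at h
    rcases ht.eq_or_lt with rfl | hlt
    · rfl
    · nlinarith
  have hderiv : HasDerivAt (fun t : ℝ => ⟪v, L.gradConj (y + t • v)⟫_ℝ) ⟪v, hess y v⟫_ℝ 0 := by
    have hline : HasDerivAt (fun t : ℝ => y + t • v) v 0 := by
      simpa using ((hasDerivAt_id (0 : ℝ)).smul_const v).const_add y
    simpa [Function.comp_def] using (innerSL ℝ v).hasFDerivAt.comp_hasDerivAt 0
      ((hhess y hy).comp_hasDerivAt_of_eq 0 hline (by simp))
  have hacc : AccPt (0 : ℝ) (𝓟 S) := by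
    simpa using (PerfectSpace.univ_preperfect (0 : ℝ) (Set.mem_univ _)).nhds_inter hS
  rw [real_inner_comm]
  exact hderiv.hasDerivWithinAt.nonneg_of_monotoneOn hacc hmono

theorem isPositive_hess (hhess : ∀ y ∈ interior L.domConj, HasFDerivAt L.gradConj (hess y) y)
    {y : X} (hy : y ∈ interior L.domConj) : (hess y).IsPositive :=
  (isPositive_iff _).2 ⟨L.isSymmetric_hess hhess hy, L.inner_hess_apply_self_nonneg hhess hy⟩

theorem bijective_hess_of_hasFDerivAt_grad
    (hhess : ∀ y ∈ interior L.domConj, HasFDerivAt L.gradConj (hess y) y)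
    {x : X} (hx : x ∈ interior L.dom) {H₂ : X →L[ℝ] X} (hH₂ : HasFDerivAt L.grad H₂ x) :
    Function.Bijective (hess (L.grad x)) := by
  have hid : (L.gradConj ∘ L.grad) =ᶠ[𝓝 x] id := by
    filter_upwards [isOpen_interior.mem_nhds hx] with z hz using L.gradConj_grad hz
  have hone : hess (L.grad x) ∘L H₂ = ContinuousLinearMap.id ℝ X :=
    (((hhess _ (L.grad_mem_interior_domConj hx)).comp x hH₂).congr_of_eventuallyEq
      hid.symm).unique (hasFDerivAt_id x)
  have hsurj : Function.Surjective (hess (L.grad x)) := fun v => ⟨H₂ v, congr($hone v)⟩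
  exact ⟨LinearMap.injective_iff_surjective.2 hsurj, hsurj⟩

theorem grad_smul {p : ℝ} (hf : ∀ t : ℝ, 0 < t → ∀ z, L.f (t • z) = t ^ p * L.f z)
    {t : ℝ} (ht : 0 < t) {x : X} (hx : x ∈ interior L.dom)
    (htx : t • x ∈ interior L.dom) : L.grad (t • x) = t ^ (p - 1) • L.grad x := by
  have h₁ := (hasGradientAt_iff_hasFDerivAt.1 (L.hasGrad _ htx)).comp x
    (t • ContinuousLinearMap.id ℝ X).hasFDerivAt
  have h₂ : HasFDerivAt (fun z => L.f (t • z))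
      (t ^ p • InnerProductSpace.toDual ℝ X (L.grad x)) x := by
    simp_rw [hf t ht]
    exact (hasGradientAt_iff_hasFDerivAt.1 (L.hasGrad x hx)).const_mul (t ^ p)
  refine ext_inner_right ℝ fun v => ?_
  have h := congr($(h₁.unique h₂) v)
  simp only [ContinuousLinearMap.comp_smulₛₗ, Real.ringHom_apply, ContinuousLinearMap.comp_id,
    smul_apply, InnerProductSpace.toDual_apply_apply, smul_eq_mul] at h
  rw [real_inner_smul_left, Real.rpow_sub_one ht.ne']
  field_simp
  linarith

theorem sub_one_smul_hess_grad_grad {p : ℝ}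
    (hf : ∀ t : ℝ, 0 < t → ∀ z, L.f (t • z) = t ^ p * L.f z)
    (hhess : ∀ y ∈ interior L.domConj, HasFDerivAt L.gradConj (hess y) y)
    {x : X} (hx : x ∈ interior L.dom) : (p - 1) • hess (L.grad x) (L.grad x) = x := by
  set y := L.grad x
  have hev : (fun t : ℝ => L.gradConj (t ^ (p - 1) • y)) =ᶠ[𝓝 1] fun t => t • x := by
    have hcont : Continuous fun t : ℝ => t • x := by fun_prop
    have hx' : interior L.dom ∈ 𝓝 ((1 : ℝ) • x) := by
      rw [one_smul]
      exact isOpen_interior.mem_nhds hx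
    filter_upwards [hcont.continuousAt.preimage_mem_nhds hx', Ioi_mem_nhds one_pos] with t htx ht
    rw [← L.grad_smul hf ht hx htx, L.gradConj_grad htx]
  have hcurve : HasDerivAt (fun t : ℝ => t ^ (p - 1) • y) ((p - 1) • y) 1 := by
    simpa using (Real.hasDerivAt_rpow_const (p := p - 1) (Or.inl one_ne_zero)).smul_const y
  have hlhs := (hhess y (L.grad_mem_interior_domConj hx)).comp_hasDerivAt_of_eq 1 hcurve
    (by simp)
  rw [← map_smul]
  exact (hlhs.congr_of_eventuallyEq hev.symm).unique
    (by simpa using (hasDerivAt_id (1 : ℝ)).smul_const x)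

theorem comp_hess_grad_ne_zero_of_homogeneous {Y : Type*} [NormedAddCommGroup Y]
    [NormedSpace ℝ Y] {p : ℝ} (hf : ∀ t : ℝ, 0 < t → ∀ z, L.f (t • z) = t ^ p * L.f z)
    (hhess : ∀ y ∈ interior L.domConj, HasFDerivAt L.gradConj (hess y) y)
    {x : X} (hx : x ∈ interior L.dom) {B : X →L[ℝ] Y} (hBx : B x ≠ 0) :
    B ∘L hess (L.grad x) ≠ 0 := by
  intro h0
  rw [← L.sub_one_smul_hess_grad_grad hf hhess hx, map_smul, ← comp_apply, h0, zero_apply,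
    smul_zero] at hBx
  exact hBx rfl

end LegendreFn

theorem ContinuousLinearMap.comp_ne_zero_of_surjective {E F G : Type*} [NormedAddCommGroup E]
    [NormedSpace ℝ E] [NormedAddCommGroup F] [NormedSpace ℝ F] [NormedAddCommGroup G]
    [NormedSpace ℝ G] {B : F →L[ℝ] G} (hB : B ≠ 0) {H : E →L[ℝ] F}
    (hH : Function.Surjective H) : B ∘L H ≠ 0 := fun h0 =>
  hB <| ext fun u => by
    obtain ⟨z, rfl⟩ := hH u
    exact congr($h0 z)

theorem EuclideanSpace.sum_abs_smul_rpow {n : ℕ} (p : ℝ) {t : ℝ} (ht : 0 ≤ t)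
    (v : EuclideanSpace ℝ (Fin n)) : ∑ j, |(t • v) j| ^ p = t ^ p * ∑ j, |v j| ^ p := by
  rw [Finset.mul_sum]
  refine Finset.sum_congr rfl fun j _ => ?_
  rw [PiLp.smul_apply, smul_eq_mul, abs_mul, abs_of_nonneg ht, Real.mul_rpow ht (abs_nonneg _)]

section Assumption

variable {X : Type*} [NormedAddCommGroup X] [InnerProductSpace ℝ X] [FiniteDimensional ℝ X]
  {I : Type*} {Yf : I → Type*} [∀ i, NormedAddCommGroup (Yf i)]
  [∀ i, InnerProductSpace ℝ (Yf i)] [∀ i, FiniteDimensional ℝ (Yf i)]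

def UniformMPBound (A : ∀ i, X →L[ℝ] Yf i) (H : X →L[ℝ] X) : Prop :=
  ∃ M : ℝ, ∀ (i : I) (G : Yf i →L[ℝ] Yf i),
    IsMPInv (A i ∘L H ∘L adjoint (A i)) G → ‖adjoint (A i) ∘L G ∘L A i‖ ≤ M

theorem uniformMPBound_of_coercive (A : ∀ i, X →L[ℝ] Yf i) {H : X →L[ℝ] X} {c : ℝ} (hc : 0 < c)
    (hH : ∀ z, c * ‖z‖ ^ 2 ≤ ⟪H z, z⟫_ℝ) : UniformMPBound A H :=
  ⟨c⁻¹, fun i _ hG => hG.norm_adjoint_comp_comp_le hc hH (A i)⟩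

theorem uniformMPBound_of_finite [Finite I] (A : ∀ i, X →L[ℝ] Yf i) (H : X →L[ℝ] X) :
    UniformMPBound A H :=
  IsMPInv.exists_bound_of_finite _ fun i G => ‖adjoint (A i) ∘L G ∘L A i‖

theorem LegendreFn.uniformMPBound_hess_of_bijective (L : LegendreFn X) {hess : X → X →L[ℝ] X}
    (hhess : ∀ y ∈ interior L.domConj, HasFDerivAt L.gradConj (hess y) y) {y : X}
    (hy : y ∈ interior L.domConj) (hbij : Function.Bijective (hess y)) (A : ∀ i, X →L[ℝ] Yf i) :
    UniformMPBound A (hess y) :=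
  let ⟨_, hc, hH⟩ := (L.isPositive_hess hhess hy).exists_pos_mul_norm_sq_le hbij.1
  uniformMPBound_of_coercive A hc hH

theorem H21.toH22 {Y : Type*} [NormedAddCommGroup Y] [InnerProductSpace ℝ Y]
    [FiniteDimensional ℝ Y] {L : LegendreFn X} {A : ∀ i, X →L[ℝ] Yf i} {AY : X →L[ℝ] Y}
    {C : Set X} {hess : X → X →L[ℝ] X} (h : H21 L A AY C hess) {Ω : Type*} [MeasurableSpace Ω]
    (P : Measure Ω) (ξ : Ω → I) : H22 L A AY C hess P ξ :=
  ⟨h.1, fun x hx =>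
    let ⟨hne, M, hM⟩ := h.2 x hx
    ⟨hne, M, Eventually.of_forall fun ω => hM (ξ ω)⟩⟩

end Assumption

theorem stmt_19_general {X Y : Type*} [NormedAddCommGroup X] [InnerProductSpace ℝ X]
    [FiniteDimensional ℝ X] [NormedAddCommGroup Y] [InnerProductSpace ℝ Y]
    [FiniteDimensional ℝ Y]
    {I : Type*} {Yf : I → Type*} [∀ i, NormedAddCommGroup (Yf i)]
    [∀ i, InnerProductSpace ℝ (Yf i)] [∀ i, FiniteDimensional ℝ (Yf i)]
    {Ω : Type*} [MeasurableSpace Ω] (P : Measure Ω)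
    (ξ : Ω → I)
    (L : LegendreFn X)
    -- H1
    (A : ∀ i, X →L[ℝ] Yf i)
    (AY : X →L[ℝ] Y) (bY : Y) (C : Set X) (hCaff : C = {x | AY x = bY})
    (hCuniv : C ≠ Set.univ)
    -- φ* is twice differentiable, with second derivative `hess`
    (hess : X → X →L[ℝ] X)
    (hhess : ∀ y ∈ interior L.domConj, HasFDerivAt L.gradConj (hess y) y)
    -- one of the four sufficient conditions
    (hcases :
      (∀ x ∈ interior L.dom ∩ C, Function.Bijective ⇑(hess (L.grad x))) ∨
      (∃ hess₂ : X → X →L[ℝ] X, ∀ x ∈ interior L.dom, HasFDerivAt L.grad (hess₂ x) x) ∨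
      (Finite I ∧ ∀ x ∈ interior L.dom ∩ C, AY ∘L hess (L.grad x) ≠ 0) ∨
      (Finite I ∧ (0 : X) ∉ C ∧
        ∃ (n : ℕ) (p : ℝ) (e : X ≃ₗᵢ[ℝ] EuclideanSpace ℝ (Fin n)),
          p ∈ Set.Ioo (1 : ℝ) 2 ∧ L.dom = Set.univ ∧
            ∀ z : X, L.f z = (1 / p) * ∑ j, |e z j| ^ p)) :
    H21 L A AY C hess ∧ H22 L A AY C hess P ξ := by
  have h21 : H21 L A AY C hess := by
    refine ⟨hhess, fun x ⟨hx, hxC⟩ => ?_⟩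
    have hAYx : AY x = bY := by rw [hCaff] at hxC; exact hxC
    have hAY : AY ≠ 0 := by
      rintro rfl
      exact hCuniv (by simp [hCaff, ← hAYx])
    have of_bijective (hbij : Function.Bijective (hess (L.grad x))) :
        AY ∘L hess (L.grad x) ≠ 0 ∧ UniformMPBound A (hess (L.grad x)) :=
      ⟨comp_ne_zero_of_surjective hAY hbij.2,
        L.uniformMPBound_hess_of_bijective hhess (L.grad_mem_interior_domConj hx) hbij A⟩
    rcases hcases with ha | ⟨hess₂, hb⟩ | ⟨_, hc⟩ | ⟨_, h0C, n, p, e, -, -, hf⟩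
    · exact of_bijective (ha x ⟨hx, hxC⟩)
    · exact of_bijective (L.bijective_hess_of_hasFDerivAt_grad hhess hx (hb x hx))
    · exact ⟨hc x ⟨hx, hxC⟩, uniformMPBound_of_finite A _⟩
    · have hhom (t : ℝ) (ht : 0 < t) (z : X) : L.f (t • z) = t ^ p * L.f z := by
        rw [hf, hf, map_smul, EuclideanSpace.sum_abs_smul_rpow p ht.le]
        ring
      have hAYx0 : AY x ≠ 0 := fun h => h0C (by simp [hCaff, ← hAYx, h])
      exact ⟨L.comp_hess_grad_ne_zero_of_homogeneous hhom hhess hx hAYx0,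
        uniformMPBound_of_finite A _⟩
  exact ⟨h21, h21.toH22 P ξ⟩

/-- Sufficient conditions for H2₁ (and, in the stochastic setting, H2₂):
(a) invertibility of `∇²φ*(∇φ(x))` on `int (dom φ) ∩ C`; (b) `φ` twice differentiable on
`int (dom φ)`; (c) `I` finite with `A ∘ ∇²φ*(∇φ(x)) ≠ 0` on `int (dom φ) ∩ C`;
(d) `I` finite, `X = ℝⁿ`, `0 ∉ C`, and `φ = (1/p)‖·‖_p^p` with `p ∈ (1,2)`. -/
theorem stmt_19 {X Y : Type*} [NormedAddCommGroup X] [InnerProductSpace ℝ X]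
    [FiniteDimensional ℝ X] [NormedAddCommGroup Y] [InnerProductSpace ℝ Y]
    [FiniteDimensional ℝ Y]
    {I : Type*} [MeasurableSpace I] {Yf : I → Type*} [∀ i, NormedAddCommGroup (Yf i)]
    [∀ i, InnerProductSpace ℝ (Yf i)] [∀ i, FiniteDimensional ℝ (Yf i)]
    {Ω : Type*} [MeasurableSpace Ω] (P : Measure Ω) [IsProbabilityMeasure P]
    (ξ : Ω → I) (hξ : Measurable ξ)
    (L : LegendreFn X)
    -- H1
    (A : ∀ i, X →L[ℝ] Yf i) (b : ∀ i, Yf i) (hAne : ∀ i, A i ≠ 0)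
    (Cs : I → Set X) (hCs : ∀ i, Cs i = {x | A i x = b i})
    (AY : X →L[ℝ] Y) (bY : Y) (C : Set X) (hCaff : C = {x | AY x = bY})
    (hCuniv : C ≠ Set.univ)
    -- φ* is twice differentiable, with second derivative `hess`
    (hess : X → X →L[ℝ] X)
    (hhess : ∀ y ∈ interior L.domConj, HasFDerivAt L.gradConj (hess y) y)
    -- one of the four sufficient conditions
    (hcases :
      (∀ x ∈ interior L.dom ∩ C, Function.Bijective ⇑(hess (L.grad x))) ∨
      (∃ hess₂ : X → X →L[ℝ] X, ∀ x ∈ interior L.dom, HasFDerivAt L.grad (hess₂ x) x) ∨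
      (Finite I ∧ ∀ x ∈ interior L.dom ∩ C, AY ∘L hess (L.grad x) ≠ 0) ∨
      (Finite I ∧ (0 : X) ∉ C ∧
        ∃ (n : ℕ) (p : ℝ) (e : X ≃ₗᵢ[ℝ] EuclideanSpace ℝ (Fin n)),
          p ∈ Set.Ioo (1 : ℝ) 2 ∧ L.dom = Set.univ ∧
            ∀ z : X, L.f z = (1 / p) * ∑ j, |e z j| ^ p)) :
    H21 L A AY C hess ∧ H22 L A AY C hess P ξ :=
  stmt_19_general P ξ L A AY bY C hCaff hCuniv hess hhess hcases
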